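/- arXiv:2605.13003 — 4 statements merged into one kernel-verified Lean document; each statement's English description precedes it below -/
import Mathlib

section
/- Let R0 and F0 be dual Dyck sequences and let rowsert(R0,F0) = (E,R). Then both the final row R and the evicted sequence E are dual Dyck sequences. -/
/-- A finite integer sequence is a *dual Dyck sequence* if each entry is at
least the previous entry plus 2. The empty sequence is allowed. -/
def DualDyck (x : List ℤ) : Prop := List.Chain' (fun a b => a + 2 ≤ b) x

/-- Length of the maximal `+2`-chain starting at the first position. -/
def chainUp : List ℤ → ℕ
  | [] => 0
  | [_] => 1
  | a :: b :: t => if b = a + 2 then chainUp (b :: t) + 1 else 1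

/-- One step of row insertion.  The state is the current row `R` and the
current input with head `a` and tail `F`.  The result is
`(newly evicted block, new row, new remaining input)`. -/
def rowsertStep (R : List ℤ) (a : ℤ) (F : List ℤ) :
    List ℤ × List ℤ × List ℤ :=
  match R.findIdx? (fun r => decide (a ≤ r + 1)) with
  | none => ([], R ++ [a], F)                                   -- Case 0
  | some i =>
    let ri := R.getD i 0
    if a ≤ ri then ([ri], R.set i a, F)                         -- Case 1
    else
      let j := chainUp (R.drop i)
      let k := chainUp (a :: F)
      if j ≤ k then                                             -- Case 2
        ((R.drop i).take j,
         R.take i ++ (a :: F).take j ++ R.drop (i + j),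
         (a :: F).drop j)
      else                                                      -- Case 3
        ((a :: F).take k, R, (a :: F).drop k)

/-- Fuel-indexed run of row insertion on state `(E, R, F)`.  Each step
consumes at least one input element, so fuel `F.length` always suffices. -/
def rowsertAux : ℕ → List ℤ → List ℤ → List ℤ → List ℤ × List ℤ
  | 0, E, R, _ => (E, R)
  | _ + 1, E, R, [] => (E, R)
  | fuel + 1, E, R, a :: F =>
      let s := rowsertStep R a F
      rowsertAux fuel (E ++ s.1) s.2.1 s.2.2

/-- Row insertion `rowsert(R₀, F₀) = (E, R)`. -/
def rowsert (R0 F0 : List ℤ) : List ℤ × List ℤ :=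
  rowsertAux F0.length [] R0 F0

/-!
Along the run, `E`, `R` and `F` stay dual Dyck, and the last evicted entry stays at least 2
below every row entry `r` that the next input entry `a` can reach (`a ≤ r + 1`). The block
evicted next starts at such an entry, or at `a` itself in Case 3, so it extends `E`.
Maximality of the `+2`-chains is what restores the invariant: the entry following an exchanged
row chain, or an evicted input chain, exceeds the chain's last entry by at least 3. This keeps the
new row dual Dyck in Case 2 and puts the entries just handled out of reach of the next input.
-/

open List

theorem chainUp_pos {l : List ℤ} (h : l ≠ []) : 0 < chainUp l := by
  match l with
  | [_] => simp [chainUp]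
  | a :: b :: t => unfold chainUp; split <;> omega

theorem take_eq_map_range_of_le_chainUp {x : ℤ} {l : List ℤ} {t : ℕ}
    (ht : t ≤ chainUp (x :: l)) : (x :: l).take t = (range t).map (fun n : ℕ => x + 2 * n) := by
  induction l generalizing x t with
  | nil =>
    simp only [chainUp] at ht
    interval_cases t <;> simp
  | cons b l ih =>
    cases t with
    | zero => simp
    | succ t =>
      rw [range_succ_eq_map, map_cons, map_map, take_succ_cons]
      unfold chainUp at ht
      split_ifs at ht with hb
      · rw [ih (by omega), hb]
        simp only [Nat.cast_zero, mul_zero, add_zero, cons.injEq, true_and, map_inj_left]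
        intro n _
        simp only [Function.comp_apply, Nat.succ_eq_add_one]
        push_cast
        ring
      · obtain rfl : t = 0 := by omega
        simp

theorem chainUp_maximal :
    ∀ (l : List ℤ), ∀ x ∈ (l.take (chainUp l)).getLast?, ∀ y ∈ (l.drop (chainUp l)).head?,
      y ≠ x + 2
  | [] | [_] => by simp [chainUp]
  | a :: b :: t => by
    unfold chainUp
    split_ifs with hb
    · obtain ⟨c, hc⟩ := Nat.exists_eq_add_one.2 (chainUp_pos (l := b :: t) (cons_ne_nil b t))
      have ih := chainUp_maximal (b :: t)
      rw [hc] at ih ⊢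
      simpa [take_succ_cons] using ih
    · simpa using hb

theorem DualDyck.add_two_le_of_mem_append {l₁ l₂ : List ℤ} {x y : ℤ}
    (h : DualDyck (l₁ ++ l₂)) (hx : x ∈ l₁) (hy : y ∈ l₂) : x + 2 ≤ y :=
  (@IsChain.pairwise _ _ _ ⟨fun h₁ h₂ => by omega⟩ h).rel_of_mem_append hx hy

theorem DualDyck.le_of_mem_of_getLast? {l : List ℤ} {x z : ℤ} (h : DualDyck l) (hx : x ∈ l)
    (hz : z ∈ l.getLast?) : x ≤ z := by
  obtain ⟨ys, rfl⟩ := getLast?_eq_some_iff.1 hz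
  rcases mem_append.1 hx with hx | hx
  · have := h.add_two_le_of_mem_append hx (mem_singleton_self z)
    omega
  · exact (mem_singleton.1 hx).le

theorem DualDyck.add_three_le_of_chainUp {l : List ℤ} (h : DualDyck l) :
    ∀ x ∈ (l.take (chainUp l)).getLast?, ∀ y ∈ (l.drop (chainUp l)).head?, x + 3 ≤ y := by
  intro x hx y hy
  have hle := (isChain_append.1 ((take_append_drop (chainUp l) l).symm ▸ h)).2.2 x hx y hy
  have hne := chainUp_maximal l x hx y hy
  omega

theorem List.not_of_mem_take_of_findIdx?_eq_some {α : Type*} {p : α → Bool} {xs : List α}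
    {i : ℕ} (h : xs.findIdx? p = some i) {x : α} (hx : x ∈ xs.take i) : ¬ p x := by
  obtain ⟨j, hj, rfl⟩ := mem_take_iff_getElem.1 hx
  exact (findIdx?_eq_some_iff_getElem.1 h).2.2 j (by omega)

structure RowsertInvariant (E R F : List ℤ) : Prop where
  evicted : DualDyck E
  row : DualDyck R
  input : DualDyck F
  add_two_le : ∀ e ∈ E.getLast?, ∀ a ∈ F.head?, ∀ r ∈ R, a ≤ r + 1 → e + 2 ≤ r

namespace RowsertInvariant

variable {E R F : List ℤ} {a : ℤ}

theorem append_head (h : RowsertInvariant E R (a :: F)) (hR : ∀ x ∈ R, x + 2 ≤ a) :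
    RowsertInvariant E (R ++ [a]) F := by
  have hF := isChain_cons.1 h.input
  refine ⟨h.evicted, h.row.append (isChain_singleton a) ?_, hF.2, ?_⟩
  · intro x hx y hy
    cases hy
    exact hR x (mem_of_getLast? hx)
  · intro e _ a' ha' x hx hax
    have := hF.1 a' ha'
    rcases mem_append.1 hx with hx | hx
    · have := hR x hx
      omega
    · rw [mem_singleton.1 hx] at hax
      omega

theorem bump {L T : List ℤ} {r : ℤ} (h : RowsertInvariant E (L ++ r :: T) (a :: F))
    (hL : ∀ x ∈ L, x + 2 ≤ a) (har : a ≤ r) :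
    RowsertInvariant (E ++ [r]) (L ++ a :: T) F := by
  have hF := isChain_cons.1 h.input
  have hrT : DualDyck (r :: T) := h.row.right_of_append
  refine ⟨h.evicted.append (isChain_singleton r) ?_, ?_, hF.2, ?_⟩
  · intro x hx y hy
    cases hy
    exact h.add_two_le x hx a rfl r (by simp) (by omega)
  · refine h.row.left_of_append.append (hrT.imp_head fun hz => by omega) ?_
    intro x hx y hy
    cases hy
    exact hL x (mem_of_getLast? hx)
  · intro e he a' ha' x hx hax
    obtain rfl : r = e := by simpa using he
    have := hF.1 a' ha'
    rcases mem_append.1 hx with hx | hx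
    · have := hL x hx
      omega
    rcases mem_cons.1 hx with rfl | hx
    · omega
    · exact hrT.add_two_le_of_mem_append (l₁ := [r]) (mem_singleton_self r) hx

theorem evict_chain (h : RowsertInvariant E R (a :: F)) (ha : a - 1 ∈ R) :
    RowsertInvariant (E ++ (a :: F).take (chainUp (a :: F))) R
      ((a :: F).drop (chainUp (a :: F))) := by
  have hk := chainUp_pos (l := a :: F) (cons_ne_nil a F)
  have hX : (a :: F).take (chainUp (a :: F)) ≠ [] := by simp [take_eq_nil_iff, hk.ne']
  refine ⟨h.evicted.append (h.input.take _) ?_, h.row, h.input.drop _, ?_⟩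
  · intro x hx y hy
    obtain rfl : a = y := by simpa [head?_take, hk.ne'] using hy
    have := h.add_two_le x hx a rfl (a - 1) ha (by omega)
    omega
  · intro e he a' ha' r hr har
    rw [getLast?_append_of_ne_nil _ hX] at he
    have := h.input.add_three_le_of_chainUp e he a' ha'
    omega

theorem exchange_chain {L M : List ℤ} (h : RowsertInvariant E (L ++ M) (a :: F))
    (hL : ∀ x ∈ L, x + 2 ≤ a) (hM : M.head? = some (a - 1))
    (hjk : chainUp M ≤ chainUp (a :: F)) :
    RowsertInvariant (E ++ M.take (chainUp M))
      (L ++ (a :: F).take (chainUp M) ++ M.drop (chainUp M)) ((a :: F).drop (chainUp M)) := by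
  obtain ⟨T, rfl⟩ := head?_eq_some_iff.1 hM
  -- The inserted and the evicted chains are the same progression, shifted by 1.
  have hXlast : ((a :: F).take (chainUp ((a - 1) :: T))).getLast? =
      some (a + 2 * (chainUp ((a - 1) :: T) - 1 : ℕ)) := by
    rw [take_eq_map_range_of_le_chainUp hjk, getLast?_map, getLast?_range,
      if_neg (chainUp_pos (cons_ne_nil _ _)).ne']
    rfl
  have hYlast : (((a - 1) :: T).take (chainUp ((a - 1) :: T))).getLast? =
      some (a + 2 * (chainUp ((a - 1) :: T) - 1 : ℕ) - 1) := by
    rw [take_eq_map_range_of_le_chainUp le_rfl, getLast?_map, getLast?_range,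
      if_neg (chainUp_pos (cons_ne_nil _ _)).ne', Option.map_some, sub_add_eq_add_sub]
  have hM : DualDyck ((a - 1) :: T) := h.row.right_of_append
  have hD := hM.add_three_le_of_chainUp _ hYlast
  have hj : 0 < chainUp ((a - 1) :: T) := chainUp_pos (cons_ne_nil _ _)
  generalize a + 2 * ((chainUp ((a - 1) :: T) - 1 : ℕ) : ℤ) = c at hXlast hYlast hD
  generalize chainUp ((a - 1) :: T) = j at *
  have hG : ∀ y ∈ ((a :: F).drop j).head?, c + 2 ≤ y :=
    (isChain_append.1 ((take_append_drop j (a :: F)).symm ▸ h.input)).2.2 c hXlast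
  have hLX : DualDyck (L ++ (a :: F).take j) := by
    refine h.row.left_of_append.append (h.input.take j) fun x hx y hy => ?_
    obtain rfl : a = y := by simpa [head?_take, hj.ne'] using hy
    exact hL x (mem_of_getLast? hx)
  have hLXlast : (L ++ (a :: F).take j).getLast? = some c := by simp [getLast?_append, hXlast]
  refine ⟨h.evicted.append (hM.take j) ?_, hLX.append (hM.drop j) ?_, h.input.drop j, ?_⟩
  · intro x hx y hy
    obtain rfl : a - 1 = y := by simpa [head?_take, hj.ne'] using hy
    exact h.add_two_le x hx a rfl (a - 1) (by simp) (by omega)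
  · intro x hx
    rw [hLXlast, Option.mem_some_iff] at hx
    subst hx
    intro y hy
    have := hD y hy
    omega
  · intro e he a' ha' x hx hax
    obtain rfl : c - 1 = e := by simpa [getLast?_append, hYlast] using he
    have := hG a' ha'
    rcases mem_append.1 hx with hx | hx
    · have := hLX.le_of_mem_of_getLast? hx hLXlast
      omega
    · rw [← take_append_drop j ((a - 1) :: T)] at hM
      exact hM.add_two_le_of_mem_append (mem_of_getLast? hYlast) hx

theorem step (h : RowsertInvariant E R (a :: F)) :
    RowsertInvariant (E ++ (rowsertStep R a F).1) (rowsertStep R a F).2.1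
      (rowsertStep R a F).2.2 := by
  unfold rowsertStep
  cases hfind : R.findIdx? (fun r => decide (a ≤ r + 1)) with
  | none =>
    refine (append_nil E).symm ▸ h.append_head fun x hx => ?_
    have := findIdx?_eq_none_iff.1 hfind x hx
    simp only [decide_eq_false_iff_not] at this
    omega
  | some i =>
    obtain ⟨hi, hpi, -⟩ := findIdx?_eq_some_iff_getElem.1 hfind
    simp only [decide_eq_true_eq] at hpi
    have hL : ∀ x ∈ R.take i, x + 2 ≤ a := fun x hx => by
      have := not_of_mem_take_of_findIdx?_eq_some hfind hx
      simp only [decide_eq_true_eq] at this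
      omega
    simp only [getD_eq_getElem _ _ hi]
    split_ifs with h1 h2
    · have hsplit : R = R.take i ++ R[i] :: R.drop (i + 1) := by
        rw [← drop_eq_getElem_cons hi, take_append_drop]
      rw [set_eq_take_append_cons_drop, if_pos hi]
      exact (hsplit ▸ h).bump hL h1
    · rw [← drop_drop]
      refine ((take_append_drop i R).symm ▸ h).exchange_chain hL ?_ h2
      rw [head?_drop, getElem?_eq_getElem hi]
      congr 1
      omega
    · exact h.evict_chain (by rw [show a - 1 = R[i] by omega]; exact getElem_mem hi)

theorem dualDyck_rowsertAux (fuel : ℕ) (h : RowsertInvariant E R F) :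
    DualDyck (rowsertAux fuel E R F).1 ∧ DualDyck (rowsertAux fuel E R F).2 := by
  induction fuel generalizing E R F with
  | zero => exact ⟨h.evicted, h.row⟩
  | succ n ih =>
    cases F with
    | nil => exact ⟨h.evicted, h.row⟩
    | cons a F => exact ih h.step

end RowsertInvariant

/-- **Row insertion preserves dual Dyck sequences.**  If `R₀` and `F₀` are dual
Dyck sequences and `rowsert(R₀, F₀) = (E, R)`, then both the evicted sequence
`E` and the final row `R` are dual Dyck sequences. -/
theorem rowsert_dualDyck (R0 F0 E R : List ℤ)
    (hR0 : DualDyck R0) (hF0 : DualDyck F0)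
    (h : rowsert R0 F0 = (E, R)) :
    DualDyck E ∧ DualDyck R := by
  have hinit : RowsertInvariant [] R0 F0 := ⟨isChain_nil, hR0, hF0, by simp⟩
  have h' : rowsertAux F0.length [] R0 F0 = (E, R) := h
  simpa only [h'] using hinit.dualDyck_rowsertAux F0.length
end

section
/- Let R0 and F0 be dual Dyck sequences with rowsert(R0,F0) = (E,R), and suppose that no step of this run of rowsert applies Case 0. Then worsert(E,R) = (R0,F0). -/
/-- Length of the maximal `-2`-chain starting at the first position (used on
reversed lists to measure maximal `+2`-chains ending at a given position). -/
def chainDown : List ℤ → ℕ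
  | [] => 0
  | [_] => 1
  | a :: b :: t => if b = a - 2 then chainDown (b :: t) + 1 else 1

/-- The run of row insertion from row `R` and input `F` never applies
Case 0, i.e. at every step the comparison index search succeeds. -/
def RowsertNoCase0 : ℕ → List ℤ → List ℤ → Prop
  | 0, _, _ => True
  | _ + 1, _, [] => True
  | fuel + 1, R, a :: F =>
      (R.findIdx? (fun r => decide (a ≤ r + 1))).isSome = true ∧
      (let s := rowsertStep R a F
       RowsertNoCase0 fuel s.2.1 s.2.2)

/-- Index of the *last* entry of `R` satisfying `p`. -/
def findIdxFromRight? (p : ℤ → Bool) (R : List ℤ) : Option ℕ :=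
  match R.reverse.findIdx? p with
  | none => none
  | some k => some (R.length - 1 - k)

/-- One step of reverse row insertion on the state `(E, R, F)` with `E`
nonempty. -/
def worsertStep (E R F : List ℤ) : List ℤ × List ℤ × List ℤ :=
  let b := E.getLastD 0
  match findIdxFromRight? (fun r => decide (r - 1 ≤ b)) R with
  | none => (E.dropLast, b :: R, F)                              -- Case 0
  | some i =>
    let ri := R.getD i 0
    if ri ≤ b then (E.dropLast, R.set i b, ri :: F)              -- Case 1
    else
      let j := chainDown ((R.take (i + 1)).reverse)
      let k := chainDown E.reverse
      if j ≤ k then                                              -- Case 2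
        (E.take (E.length - j),
         R.take (i + 1 - j) ++ E.drop (E.length - j) ++ R.drop (i + 1),
         (R.take (i + 1)).drop (i + 1 - j) ++ F)
      else                                                       -- Case 3
        (E.take (E.length - k), R, E.drop (E.length - k) ++ F)

/-- Fuel-indexed run of reverse row insertion on the state `(E, R, F)`. -/
def worsertAux : ℕ → List ℤ → List ℤ → List ℤ → List ℤ × List ℤ
  | 0, _, R, F => (R, F)
  | fuel + 1, E, R, F =>
      if E = [] then (R, F)
      else
        let s := worsertStep E R F
        worsertAux fuel s.1 s.2.1 s.2.2

/-- Reverse row insertion `worsert(E₀, R₀) = (R, F)`. -/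
def worsert (E0 R0 : List ℤ) : List ℤ × List ℤ :=
  worsertAux E0.length E0 R0 []

/-!
Each step of row insertion other than Case 0 is undone by a single step of reverse row insertion.
Since the row stays a dual Dyck sequence, the last evicted entry `b` is found again as the last
row entry with `R[i] - 1 ≤ b`, and the two chain lengths compared by `worsert` reproduce the case
taken by `rowsert`. The one non-local point is Case 3: the `+2`-chain at the end of the evicted
sequence, which `worsert` measures, must not reach back past the block just evicted. This is what
the invariant `NoStraddle` guarantees: the last evicted entry `b`, a next input entry `b + 2` and
a row entry `b + 1` never occur together. Induction along the run then undoes the steps in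
reverse order.
-/

theorem List.exists_eq_append_cons_of_findIdx?_eq_some {α : Type*} {p : α → Bool} {l : List α}
    {i : ℕ} (h : l.findIdx? p = some i) :
    ∃ A x C, l = A ++ x :: C ∧ A.length = i ∧ p x ∧ ∀ y ∈ A, p y = false := by
  induction l generalizing i with
  | nil => simp at h
  | cons a l ih =>
    rw [List.findIdx?_cons] at h
    split at h
    · exact ⟨[], a, l, rfl, by simpa using h, by assumption, by simp⟩
    · obtain ⟨j, hj, rfl⟩ := Option.map_eq_some_iff.mp h
      obtain ⟨A, x, C, rfl, rfl, hx, hA⟩ := ih hj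
      exact ⟨a :: A, x, C, rfl, rfl, hx, by simp_all⟩

theorem List.getD_append_cons_length {α : Type*} (A C : List α) (x d : α) :
    (A ++ x :: C).getD A.length d = x := by
  simp

theorem List.take_length_add_one_append_cons {α : Type*} (L C : List α) (x : α) :
    (L ++ x :: C).take (L.length + 1) = L ++ [x] := by
  induction L <;> simp_all

theorem List.drop_length_add_one_append_cons {α : Type*} (L C : List α) (x : α) :
    (L ++ x :: C).drop (L.length + 1) = C := by
  induction L <;> simp_all

theorem findIdxFromRight?_append_cons {p : ℤ → Bool} {A C : List ℤ} {x : ℤ} (hx : p x = true)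
    (hC : ∀ y ∈ C, p y = false) : findIdxFromRight? p (A ++ x :: C) = some A.length := by
  have h : (A ++ x :: C).reverse.findIdx? p = some C.length := by
    rw [List.reverse_append, List.reverse_cons, List.append_assoc, List.findIdx?_append,
      List.findIdx?_eq_none_iff.mpr (by simpa using hC)]
    simp [List.findIdx?_cons, hx]
  simp only [findIdxFromRight?, h, List.length_append, List.length_cons]
  congr 1
  omega

theorem dualDyck_iff_pairwise {l : List ℤ} : DualDyck l ↔ l.Pairwise (fun a b => a + 2 ≤ b) :=
  @List.isChain_iff_pairwise _ _ _ ⟨fun h₁ h₂ => by omega⟩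

namespace DualDyck

theorem pairwise {l : List ℤ} (h : DualDyck l) : l.Pairwise (fun a b => a + 2 ≤ b) :=
  dualDyck_iff_pairwise.mp h

theorem sublist {l l' : List ℤ} (h : DualDyck l) (hl : l'.Sublist l) : DualDyck l' :=
  dualDyck_iff_pairwise.mpr (h.pairwise.sublist hl)

variable {A C : List ℤ} {x : ℤ}

theorem add_two_le_of_mem_left (h : DualDyck (A ++ x :: C)) : ∀ y ∈ A, y + 2 ≤ x :=
  fun y hy => (List.pairwise_append.mp h.pairwise).2.2 y hy x List.mem_cons_self

theorem add_two_le_of_mem_right (h : DualDyck (A ++ x :: C)) : ∀ y ∈ C, x + 2 ≤ y :=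
  fun _ hy => List.rel_of_pairwise_cons (List.pairwise_append.mp h.pairwise).2.1 hy

theorem add_three_le_of_mem_right (h : DualDyck (A ++ x :: C)) (hC : C.head? ≠ some (x + 2)) :
    ∀ y ∈ C, x + 3 ≤ y := by
  obtain _ | ⟨c, C⟩ := C
  · simp
  have hc : x + 3 ≤ c := by
    have := h.add_two_le_of_mem_right c List.mem_cons_self
    simp only [List.head?_cons, ne_eq, Option.some.injEq] at hC
    omega
  have hC' : ∀ y ∈ C, c + 2 ≤ y := fun _ hy =>
    List.rel_of_pairwise_cons (List.pairwise_append.mp h.pairwise).2.1.of_cons hy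
  intro y hy
  rcases List.mem_cons.mp hy with rfl | hy
  · exact hc
  · have := hC' y hy
    omega

theorem getLast?_ne {z : ℤ} (h : DualDyck (A ++ x :: C)) (hz : x < z + 2) : A.getLast? ≠ some z :=
  fun hA => absurd (h.add_two_le_of_mem_left z (List.mem_of_getLast? hA)) (by omega)

theorem lower {a : ℤ} (h : DualDyck (A ++ x :: C)) (hA : ∀ y ∈ A, y + 2 ≤ a) (hax : a ≤ x) :
    DualDyck (A ++ a :: C) := by
  rw [dualDyck_iff_pairwise, List.pairwise_append, List.pairwise_cons] at h ⊢
  obtain ⟨hA', ⟨hx, hC⟩, hAC⟩ := h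
  refine ⟨hA', ⟨fun y hy => by have := hx y hy; omega, hC⟩, fun y hy z hz => ?_⟩
  rcases List.mem_cons.mp hz with rfl | hz
  · exact hA y hy
  · exact hAC y hy z (List.mem_cons_of_mem _ hz)

theorem raise {B : List ℤ} (h : DualDyck (A ++ B ++ C)) (hBC : ∀ y ∈ B, ∀ z ∈ C, y + 3 ≤ z) :
    DualDyck (A ++ B.map (· + 1) ++ C) := by
  rw [dualDyck_iff_pairwise] at h ⊢
  simp only [List.pairwise_append, List.pairwise_map, List.mem_append, List.mem_map] at h ⊢
  obtain ⟨⟨hA, hB, hAB⟩, hC, hABC⟩ := h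
  refine ⟨⟨hA, hB.imp fun h => by omega, ?_⟩, hC, ?_⟩
  · rintro y hy _ ⟨b, hb, rfl⟩
    have := hAB y hy b hb
    omega
  · rintro y (hy | ⟨b, hb, rfl⟩) z hz
    · exact hABC y (Or.inl hy) z hz
    · have := hBC b hb z hz
      omega

end DualDyck

def plusTwoChain (a : ℤ) : ℕ → List ℤ
  | 0 => []
  | n + 1 => a :: plusTwoChain (a + 2) n

@[simp]
theorem length_plusTwoChain (a : ℤ) (n : ℕ) : (plusTwoChain a n).length = n := by
  induction n generalizing a <;> simp [plusTwoChain, *]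

theorem plusTwoChain_add (a : ℤ) (m n : ℕ) :
    plusTwoChain a (m + n) = plusTwoChain a m ++ plusTwoChain (a + 2 * m) n := by
  induction m generalizing a with
  | zero => simp [plusTwoChain]
  | succ m ih =>
    rw [Nat.add_right_comm, plusTwoChain, ih, plusTwoChain]
    congr 3
    push_cast
    ring

theorem plusTwoChain_succ' (a : ℤ) (n : ℕ) :
    plusTwoChain a (n + 1) = plusTwoChain a n ++ [a + 2 * n] := by
  rw [plusTwoChain_add]
  rfl

theorem mem_plusTwoChain {x a : ℤ} {n : ℕ} : x ∈ plusTwoChain a n ↔ ∃ t < n, x = a + 2 * t := by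
  induction n generalizing a with
  | zero => simp [plusTwoChain]
  | succ n ih =>
    simp only [plusTwoChain, List.mem_cons, ih]
    constructor
    · rintro (rfl | ⟨t, ht, rfl⟩)
      · exact ⟨0, by omega, by simp⟩
      · exact ⟨t + 1, by omega, by push_cast; ring⟩
    · rintro ⟨_ | t, ht, rfl⟩
      · simp
      · exact Or.inr ⟨t, by omega, by push_cast; ring⟩

theorem map_add_one_plusTwoChain (a : ℤ) (n : ℕ) :
    (plusTwoChain a n).map (· + 1) = plusTwoChain (a + 1) n := by
  induction n generalizing a with
  | zero => rfl
  | succ n ih => simp only [plusTwoChain, List.map_cons, ih, add_right_comm a 1 2]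

theorem getLast?_append_plusTwoChain (l : List ℤ) (a : ℤ) (n : ℕ) :
    (l ++ plusTwoChain a (n + 1)).getLast? = some (a + 2 * n) := by
  rw [plusTwoChain_succ', ← List.append_assoc, List.getLast?_concat]

theorem reverse_append_plusTwoChain_succ (l : List ℤ) (a : ℤ) (n : ℕ) :
    (l ++ plusTwoChain a (n + 1)).reverse = (a + 2 * n) :: (l ++ plusTwoChain a n).reverse := by
  rw [plusTwoChain_succ', ← List.append_assoc, List.reverse_concat]

theorem one_le_chainUp_cons (a : ℤ) (l : List ℤ) : 1 ≤ chainUp (a :: l) := by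
  cases l with
  | nil => simp [chainUp]
  | cons b t => simp only [chainUp]; split <;> omega

theorem chainUp_cons_cons_of_eq {a b : ℤ} (t : List ℤ) (h : b = a + 2) :
    chainUp (a :: b :: t) = chainUp (b :: t) + 1 := by
  simp [chainUp, h]

theorem one_le_chainDown_cons (a : ℤ) (l : List ℤ) : 1 ≤ chainDown (a :: l) := by
  cases l with
  | nil => simp [chainDown]
  | cons b t => simp only [chainDown]; split <;> omega

theorem chainDown_cons_cons_of_eq {a b : ℤ} (t : List ℤ) (h : b = a - 2) :
    chainDown (a :: b :: t) = chainDown (b :: t) + 1 := by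
  simp [chainDown, h]

theorem exists_eq_plusTwoChain_chainUp_append (a : ℤ) (l : List ℤ) :
    ∃ C, a :: l = plusTwoChain a (chainUp (a :: l)) ++ C ∧
      C.head? ≠ some (a + 2 * chainUp (a :: l)) := by
  induction l generalizing a with
  | nil => exact ⟨[], rfl, by simp⟩
  | cons b t ih =>
    by_cases hb : b = a + 2
    · subst hb
      obtain ⟨C, hC, hne⟩ := ih (a + 2)
      refine ⟨C, ?_, ?_⟩
      · rw [chainUp_cons_cons_of_eq _ rfl, plusTwoChain, List.cons_append, ← hC]
      · rw [chainUp_cons_cons_of_eq _ rfl]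
        convert hne using 2
        push_cast
        ring
    · have h1 : chainUp (a :: b :: t) = 1 := by simp [chainUp, hb]
      exact ⟨b :: t, by rw [h1]; rfl, by rw [h1]; simpa using hb⟩

theorem le_chainDown_reverse_append_plusTwoChain (l : List ℤ) (a : ℤ) (n : ℕ) :
    n ≤ chainDown (l ++ plusTwoChain a n).reverse := by
  induction n with
  | zero => exact Nat.zero_le _
  | succ n ih =>
    rw [reverse_append_plusTwoChain_succ]
    cases n with
    | zero => exact one_le_chainDown_cons _ _
    | succ n =>
      rw [reverse_append_plusTwoChain_succ] at ih ⊢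
      rw [chainDown_cons_cons_of_eq _ (by push_cast; ring)]
      omega

theorem chainDown_reverse_append_plusTwoChain {l : List ℤ} {a : ℤ} (n : ℕ)
    (hl : l.getLast? ≠ some (a - 2)) : chainDown (l ++ plusTwoChain a (n + 1)).reverse = n + 1 := by
  induction n with
  | zero =>
    rw [reverse_append_plusTwoChain_succ, plusTwoChain, List.append_nil]
    rw [← List.head?_reverse] at hl
    generalize l.reverse = m at hl ⊢
    obtain _ | ⟨b, t⟩ := m
    · rfl
    · simp only [List.head?_cons, ne_eq, Option.some.injEq] at hl
      simp [chainDown, hl]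
  | succ n ih =>
    rw [reverse_append_plusTwoChain_succ, reverse_append_plusTwoChain_succ,
      chainDown_cons_cons_of_eq _ (by push_cast; ring), ← reverse_append_plusTwoChain_succ, ih]

section WorsertStep

variable {A C E G : List ℤ} {r : ℤ}

theorem worsertStep_bump {a : ℤ} (hR : DualDyck (A ++ r :: C)) (har : a ≤ r) :
    worsertStep (E ++ [r]) (A ++ a :: C) G = (E, A ++ r :: C, a :: G) := by
  have hfind : findIdxFromRight? (fun x => decide (x - 1 ≤ r)) (A ++ a :: C) = some A.length :=
    findIdxFromRight?_append_cons (by simp; omega)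
      (fun y hy => by have := hR.add_two_le_of_mem_right y hy; simp; omega)
  simp only [worsertStep, List.getLastD_concat, hfind]
  simp [har]

theorem worsertStep_shift {n : ℕ} (hR : DualDyck (A ++ plusTwoChain r (n + 1) ++ C))
    (hC : C.head? ≠ some (r + 2 * (n + 1))) :
    worsertStep (E ++ plusTwoChain r (n + 1)) (A ++ plusTwoChain (r + 1) (n + 1) ++ C) G =
      (E, A ++ plusTwoChain r (n + 1) ++ C, plusTwoChain (r + 1) (n + 1) ++ G) := by
  have hR' : DualDyck ((A ++ plusTwoChain r n) ++ (r + 2 * n) :: C) := by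
    simpa [plusTwoChain_succ'] using hR
  have hCgap : ∀ y ∈ C, r + 2 * n + 3 ≤ y :=
    hR'.add_three_le_of_mem_right (by convert hC using 2; ring)
  have hA : A.getLast? ≠ some (r + 1 - 2) :=
    DualDyck.getLast?_ne (C := plusTwoChain (r + 2) n ++ C) (by simpa [plusTwoChain] using hR)
      (by omega)
  have hrow : A ++ plusTwoChain (r + 1) (n + 1) ++ C =
      (A ++ plusTwoChain (r + 1) n) ++ (r + 1 + 2 * n) :: C := by
    simp [plusTwoChain_succ']
  have hE : E ++ plusTwoChain r (n + 1) = (E ++ plusTwoChain r n) ++ [r + 2 * n] := by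
    rw [plusTwoChain_succ', List.append_assoc]
  have hAP : A ++ plusTwoChain (r + 1) n ++ [r + 1 + 2 * n] =
      A ++ plusTwoChain (r + 1) (n + 1) := by
    rw [plusTwoChain_succ', List.append_assoc]
  rw [hrow, hE]
  simp only [worsertStep, List.getLastD_concat]
  rw [findIdxFromRight?_append_cons (by simp; omega)
    (fun y hy => by have := hCgap y hy; simp; omega)]
  simp only [List.getD_append_cons_length]
  rw [List.take_length_add_one_append_cons, List.drop_length_add_one_append_cons, hAP, ← hE,
    chainDown_reverse_append_plusTwoChain n hA, if_neg (by omega),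
    if_pos (le_chainDown_reverse_append_plusTwoChain _ _ _)]
  simp

theorem worsertStep_pass {n : ℕ} (hR : DualDyck (A ++ plusTwoChain r (n + 2) ++ C))
    (hE : E.getLast? ≠ some (r - 1)) :
    worsertStep (E ++ plusTwoChain (r + 1) (n + 1)) (A ++ plusTwoChain r (n + 2) ++ C) G =
      (E, A ++ plusTwoChain r (n + 2) ++ C, plusTwoChain (r + 1) (n + 1) ++ G) := by
  have hrow : A ++ plusTwoChain r (n + 2) ++ C =
      (A ++ plusTwoChain r (n + 1)) ++ (r + 2 * (n + 1 : ℕ)) :: C := by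
    simp [plusTwoChain_succ' r (n + 1)]
  have hCgap : ∀ y ∈ C, r + 2 * (n + 1 : ℕ) + 2 ≤ y := (hrow ▸ hR).add_two_le_of_mem_right
  have hEX : E ++ plusTwoChain (r + 1) (n + 1) =
      (E ++ plusTwoChain (r + 1) n) ++ [r + 1 + 2 * n] := by
    rw [plusTwoChain_succ', List.append_assoc]
  have hAP : A ++ plusTwoChain r (n + 1) ++ [r + 2 * (n + 1 : ℕ)] =
      A ++ plusTwoChain r (n + 2) := by
    rw [plusTwoChain_succ' r (n + 1), List.append_assoc]
  conv_lhs => rw [hrow, hEX]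
  simp only [worsertStep, List.getLastD_concat]
  rw [findIdxFromRight?_append_cons (by simp; omega)
    (fun y hy => by have := hCgap y hy; simp; omega)]
  simp only [List.getD_append_cons_length]
  rw [List.take_length_add_one_append_cons, hAP, ← hEX,
    chainDown_reverse_append_plusTwoChain n (by convert hE using 2; ring), if_neg (by omega),
    if_neg (by have := le_chainDown_reverse_append_plusTwoChain A r (n + 2); omega)]
  simp [hrow]

end WorsertStep

/-- The steps of `rowsert` in Cases 1, 2 and 3 (`bump`, `shift`, `pass`), as relations
`RowsertMove R I X R' F'` from row `R` and input `I` to evicted block `X`, new row `R'` and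
remaining input `F'`, with `R` and `I` written in the shape that the case acts on. -/
inductive RowsertMove : List ℤ → List ℤ → List ℤ → List ℤ → List ℤ → Prop
  | bump {A C F : List ℤ} {a r : ℤ} (hA : ∀ x ∈ A, x + 2 ≤ a) (har : a ≤ r) :
      RowsertMove (A ++ r :: C) (a :: F) [r] (A ++ a :: C) F
  | shift {A C F : List ℤ} {r : ℤ} {n : ℕ} (hC : C.head? ≠ some (r + 2 * (n + 1))) :
      RowsertMove (A ++ plusTwoChain r (n + 1) ++ C) (plusTwoChain (r + 1) (n + 1) ++ F)
        (plusTwoChain r (n + 1)) (A ++ plusTwoChain (r + 1) (n + 1) ++ C) F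
  | pass {A C F : List ℤ} {r : ℤ} {n : ℕ} (hF : F.head? ≠ some (r + 1 + 2 * (n + 1))) :
      RowsertMove (A ++ plusTwoChain r (n + 2) ++ C) (plusTwoChain (r + 1) (n + 1) ++ F)
        (plusTwoChain (r + 1) (n + 1)) (A ++ plusTwoChain r (n + 2) ++ C) F

theorem rowsertStep_move {R F : List ℤ} {a : ℤ}
    (hfind : (R.findIdx? (fun r => decide (a ≤ r + 1))).isSome) :
    RowsertMove R (a :: F) (rowsertStep R a F).1 (rowsertStep R a F).2.1
      (rowsertStep R a F).2.2 := by
  obtain ⟨i, hi⟩ := Option.isSome_iff_exists.mp hfind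
  obtain ⟨A, r, C, rfl, rfl, har, hA⟩ := List.exists_eq_append_cons_of_findIdx?_eq_some hi
  simp only [decide_eq_true_eq, decide_eq_false_iff_not, not_le] at har hA
  simp only [rowsertStep, hi, List.getD_append_cons_length]
  by_cases hle : a ≤ r
  · rw [if_pos hle]
    simpa [List.set_append_right] using
      RowsertMove.bump (C := C) (F := F) (fun x hx => by have := hA x hx; omega) hle
  obtain rfl : a = r + 1 := by omega
  rw [if_neg hle, List.drop_left' rfl, List.drop_length_add_append, List.take_left' rfl]
  obtain ⟨C', hrC, hC'⟩ := exists_eq_plusTwoChain_chainUp_append r C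
  obtain ⟨F', haF, hF'⟩ := exists_eq_plusTwoChain_chainUp_append (r + 1) F
  obtain ⟨n, hn⟩ := Nat.exists_eq_add_one.mpr (one_le_chainUp_cons r C)
  obtain ⟨m, hm⟩ := Nat.exists_eq_add_one.mpr (one_le_chainUp_cons (r + 1) F)
  rw [hn] at hrC hC' ⊢
  rw [hm] at haF hF' ⊢
  split_ifs with hjk
  · obtain ⟨d, hd⟩ := Nat.exists_eq_add_of_le hjk
    rw [hd, plusTwoChain_add, List.append_assoc] at haF
    simp only [hrC, haF, List.take_left' (length_plusTwoChain _ _),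
      List.drop_left' (length_plusTwoChain _ _), ← List.append_assoc A]
    exact RowsertMove.shift (by exact_mod_cast hC')
  · obtain ⟨d, hd⟩ := Nat.exists_eq_add_of_lt (not_le.mp hjk)
    rw [hd, show m + 1 + d + 1 = (m + 2) + d by omega, plusTwoChain_add, List.append_assoc] at hrC
    simp only [hrC, haF, List.take_left' (length_plusTwoChain _ _),
      List.drop_left' (length_plusTwoChain _ _), ← List.append_assoc A]
    exact RowsertMove.pass (by exact_mod_cast hF')

def NoStraddle (E R F : List ℤ) : Prop :=
  ∀ b ∈ E.getLast?, b + 2 ∈ F.head? → b + 1 ∉ R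

namespace RowsertMove

variable {R I X R' F' : List ℤ}

theorem length_pos (hm : RowsertMove R I X R' F') : 0 < X.length := by
  cases hm <;> simp

theorem length_add_length (hm : RowsertMove R I X R' F') : X.length + F'.length = I.length := by
  cases hm <;> simp [Nat.add_comm]

theorem dualDyck_input (hm : RowsertMove R I X R' F') (hI : DualDyck I) : DualDyck F' := by
  cases hm
  · exact hI.sublist (List.sublist_cons_self _ _)
  all_goals exact hI.sublist (List.sublist_append_right _ _)

theorem dualDyck_row (hm : RowsertMove R I X R' F') (hR : DualDyck R) : DualDyck R' := by
  cases hm with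
  | bump hA har => exact hR.lower hA har
  | @shift A C _ r n hC =>
    rw [← map_add_one_plusTwoChain]
    refine hR.raise fun x hx y hy => ?_
    obtain ⟨t, ht, rfl⟩ := mem_plusTwoChain.mp hx
    have hR' : DualDyck ((A ++ plusTwoChain r n) ++ (r + 2 * n) :: C) := by
      simpa [plusTwoChain_succ'] using hR
    have := hR'.add_three_le_of_mem_right (by convert hC using 2; ring) y hy
    omega
  | pass => exact hR

theorem noStraddle (hm : RowsertMove R I X R' F') (hR : DualDyck R) (hI : DualDyck I)
    (E : List ℤ) : NoStraddle (E ++ X) R' F' := by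
  cases hm with
  | bump hA har =>
    intro b hb _ hmem
    simp only [List.getLast?_concat, Option.mem_def, Option.some.injEq] at hb
    subst hb
    rcases List.mem_append.mp hmem with hx | hx
    · have := hA _ hx
      omega
    rcases List.mem_cons.mp hx with hx | hx
    · omega
    · have := hR.add_two_le_of_mem_right _ hx
      omega
  | @shift _ _ _ r n _ =>
    intro b hb hc _
    rw [getLast?_append_plusTwoChain, Option.mem_def, Option.some.injEq] at hb
    subst hb
    have hI' : DualDyck ((plusTwoChain (r + 1) n) ++ (r + 1 + 2 * n) :: F') := by
      simpa [plusTwoChain_succ'] using hI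
    have := hI'.add_two_le_of_mem_right _ (List.mem_of_mem_head? hc)
    omega
  | pass hF =>
    intro b hb hc _
    rw [getLast?_append_plusTwoChain, Option.mem_def, Option.some.injEq] at hb
    subst hb
    exact hF (by rw [hc]; congr 1; ring)

theorem worsertStep_eq (hm : RowsertMove R I X R' F') (hR : DualDyck R) {E : List ℤ}
    (hE : NoStraddle E R I) (G : List ℤ) : worsertStep (E ++ X) R' (F' ++ G) = (E, R, I ++ G) := by
  cases hm with
  | bump hA har => exact worsertStep_bump hR har
  | shift hC => rw [worsertStep_shift hR hC, List.append_assoc _ F']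
  | @pass _ _ _ r _ _ =>
    have hE' : E.getLast? ≠ some (r - 1) := fun hb =>
      hE _ hb (by simp [plusTwoChain]; ring) (by simp [plusTwoChain])
    rw [worsertStep_pass hR hE', List.append_assoc _ F']

end RowsertMove

theorem length_worsertStep_fst_lt {E R F : List ℤ} (hE : E ≠ []) :
    (worsertStep E R F).1.length < E.length := by
  have hE' : 0 < E.length := List.length_pos_iff.mpr hE
  have one_le_chainDown {l : List ℤ} (hl : l ≠ []) : 1 ≤ chainDown l := by
    obtain ⟨b, t, rfl⟩ := List.exists_cons_of_ne_nil hl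
    exact one_le_chainDown_cons b t
  have hk := one_le_chainDown (l := E.reverse) (by simpa using hE)
  dsimp only [worsertStep]
  split
  · simp
    omega
  · rename_i i hi
    have hR : R ≠ [] := by
      rintro rfl
      simp [findIdxFromRight?] at hi
    have hj := one_le_chainDown (l := (R.take (i + 1)).reverse) (by simpa using hR)
    split_ifs <;> simp <;> omega

theorem worsertAux_congr_fuel {n m : ℕ} {E R F : List ℤ} (hn : E.length ≤ n) (hm : E.length ≤ m) :
    worsertAux n E R F = worsertAux m E R F := by
  induction n generalizing m E R F with
  | zero =>
    obtain rfl : E = [] := by simpa using hn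
    cases m <;> simp [worsertAux]
  | succ n ih =>
    by_cases hE : E = []
    · subst hE
      cases m <;> simp [worsertAux]
    have hE' := List.length_pos_iff.mpr hE
    obtain ⟨m, rfl⟩ : ∃ m', m = m' + 1 := ⟨m - 1, by omega⟩
    have := length_worsertStep_fst_lt (R := R) (F := F) hE
    simp only [worsertAux, if_neg hE]
    exact ih (by omega) (by omega)

theorem worsertAux_of_worsertStep {E X R R' F F' : List ℤ} (hX : X ≠ [])
    (h : worsertStep (E ++ X) R' F' = (E, R, F)) :
    worsertAux (E ++ X).length (E ++ X) R' F' = worsertAux E.length E R F := by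
  have hX' := List.length_pos_iff.mpr hX
  obtain ⟨k, hk⟩ : ∃ k, (E ++ X).length = k + 1 := ⟨(E ++ X).length - 1, by simp; omega⟩
  rw [hk, worsertAux, if_neg (by simp [hX]), h]
  dsimp only
  exact worsertAux_congr_fuel (by simp at hk; omega) le_rfl

theorem worsertAux_of_rowsertAux {n : ℕ} {E R F E' R' : List ℤ} (hR : DualDyck R)
    (hF : DualDyck F) (hS : NoStraddle E R F) (hnc : RowsertNoCase0 n R F) (hn : F.length ≤ n)
    (h : rowsertAux n E R F = (E', R')) (G : List ℤ) :
    worsertAux E'.length E' R' G = worsertAux E.length E R (F ++ G) := by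
  induction n generalizing E R F with
  | zero =>
    obtain rfl : F = [] := by simpa using hn
    simp_all [rowsertAux]
  | succ n ih =>
    obtain _ | ⟨a, F⟩ := F
    · simp_all [rowsertAux]
    obtain ⟨hfind, hnc⟩ := hnc
    have hm := rowsertStep_move (F := F) hfind
    have hlen : (rowsertStep R a F).2.2.length ≤ n := by
      have := hm.length_pos
      have := hm.length_add_length
      simp only [List.length_cons] at hn this
      omega
    rw [ih (hm.dualDyck_row hR) (hm.dualDyck_input hF) (hm.noStraddle hR hF E) hnc hlen h]
    exact worsertAux_of_worsertStep (List.ne_nil_of_length_pos hm.length_pos)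
      (hm.worsertStep_eq hR hS G)

/-- **Global reversibility without Case 0.**  If `R₀, F₀` are dual Dyck
sequences, `rowsert(R₀, F₀) = (E, R)`, and no step of this row-insertion run
applies Case 0, then `worsert(E, R) = (R₀, F₀)`. -/
theorem worsert_rowsert (R0 F0 E R : List ℤ)
    (hR0 : DualDyck R0) (hF0 : DualDyck F0)
    (h : rowsert R0 F0 = (E, R))
    (hnc : RowsertNoCase0 F0.length R0 F0) :
    worsert E R = (R0, F0) := by
  have hS : NoStraddle [] R0 F0 := by simp [NoStraddle]
  rw [worsert]
  simpa [worsertAux] using worsertAux_of_rowsertAux hR0 hF0 hS hnc le_rfl h []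
end

section
/- Let C = (c_0,…,c_{r−1}) be an ordinary Dyck sequence whose leftmost eligible index is i, and set x = c_i. Then c_i is the leftmost occurrence of the value x in C; consequently i > 0 and c_{i−1} = x − 1. Moreover, deleting the entry at index i from C produces an ordinary Dyck sequence. -/
/-!
Let `x = c i`; since `i` has an earlier entry equal to `x - 1 ≥ 0`, the sequence reaches `x` for a
first time `f ≤ i`, and as it climbs by at most one per step, `c f = x` and `c (f - 1) = x - 1`.
If `f < i`, the ascending run starting at `f` cannot last until `i` (else `c i > x`); its last
index `p` is followed by a non-ascent and has exactly one earlier entry equal to `c p - 1`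
(namely `p - 1`, or `f - 1` when `p = f`, unique by the eligibility of `i`), so `p < i` is
eligible. Hence `f = i`, and deleting `c i` joins `c (i - 1) = x - 1` to `c (i + 1) ≤ x`.
-/

/-- A finite integer sequence is an *affine Dyck sequence* if each entry is at
most the previous entry plus 1. -/
def AffineDyck (x : List ℤ) : Prop := List.Chain' (fun a b => b ≤ a + 1) x

/-- An *ordinary Dyck sequence* is a nonempty affine Dyck sequence starting at
`0` with all entries nonnegative. -/
def OrdDyck (x : List ℤ) : Prop :=
  x ≠ [] ∧ AffineDyck x ∧ x.getD 0 0 = 0 ∧ ∀ a ∈ x, 0 ≤ a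

/-- An index `j` of `C` is *eligible* if there is exactly one index `i < j`
with `C i = C j − 1`, and either `j` is the final index or the next entry is
at most `C j`. -/
def Eligible (C : List ℤ) (j : ℕ) : Prop :=
  j < C.length ∧
  ((Finset.range j).filter (fun i => C.getD i 0 = C.getD j 0 - 1)).card = 1 ∧
  (j + 1 = C.length ∨ C.getD (j + 1) 0 ≤ C.getD j 0)

def HasUniquePredecessor (c : ℕ → ℤ) (j : ℕ) : Prop :=
  ∃! q, q < j ∧ c q = c j - 1

theorem Finset.card_filter_range_eq_one_iff (j : ℕ) (P : ℕ → Prop) [DecidablePred P] :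
    ((Finset.range j).filter P).card = 1 ↔ ∃! q, q < j ∧ P q := by
  simp only [Finset.card_eq_one, Finset.ext_iff, Finset.mem_filter, Finset.mem_range,
    Finset.mem_singleton]
  exact ⟨fun ⟨a, ha⟩ => ⟨a, (ha a).2 rfl, fun q hq => (ha q).1 hq⟩,
    fun ⟨a, ha, hu⟩ => ⟨a, fun q => ⟨hu q, fun h => h ▸ ha⟩⟩⟩

theorem eligible_iff {C : List ℤ} {j : ℕ} :
    Eligible C j ↔ j < C.length ∧ HasUniquePredecessor (C.getD · 0) j ∧
      (j + 1 = C.length ∨ C.getD (j + 1) 0 ≤ C.getD j 0) := by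
  rw [Eligible, Finset.card_filter_range_eq_one_iff]
  rfl

section

variable {c : ℕ → ℤ}

theorem exists_first_reach {m : ℕ} {x : ℤ} (hstep : ∀ k < m, c (k + 1) ≤ c k + 1)
    (h0 : c 0 < x) (hm : x ≤ c m) :
    ∃ e < m, (∀ q ≤ e, c q < x) ∧ c e = x - 1 ∧ c (e + 1) = x := by
  classical
  have hex : ∃ k, x ≤ c k := ⟨m, hm⟩
  have hpos : Nat.find hex ≠ 0 := fun h => by
    have := Nat.find_spec hex
    rw [h] at this
    omega
  obtain ⟨e, he⟩ := Nat.exists_eq_succ_of_ne_zero hpos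
  have hreach : x ≤ c (e + 1) := by simpa [he] using Nat.find_spec hex
  have hbelow : ∀ q ≤ e, c q < x := fun q hq =>
    not_le.mp (Nat.find_min hex (by omega))
  have hem : e < m := by have := Nat.find_min' hex hm; omega
  have := hstep e hem
  have := hbelow e le_rfl
  exact ⟨e, hem, hbelow, by omega, by omega⟩

theorem eq_add_of_forall_succ_eq_add_one {f s : ℕ}
    (h : ∀ t < s, c (f + t + 1) = c (f + t) + 1) : c (f + s) = c f + s := by
  induction s with
  | zero => simp
  | succ s ih =>
    rw [← add_assoc, h s s.lt_succ_self, ih fun t ht => h t (by omega)]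
    push_cast
    ring

theorem exists_first_nonascent {f i : ℕ} (hstep : ∀ k < i, c (k + 1) ≤ c k + 1)
    (hfi : f < i) (hle : c i ≤ c f) :
    ∃ s, f + s < i ∧ c (f + s + 1) ≤ c (f + s) ∧ ∀ t ≤ s, c (f + t) = c f + t := by
  classical
  have hex : ∃ s, f + s < i ∧ c (f + s + 1) ≤ c (f + s) := by
    by_contra! hasc
    have hrun := eq_add_of_forall_succ_eq_add_one (c := c) (f := f) (s := i - f)
      fun t ht => le_antisymm (hstep _ (by omega)) (hasc t (by omega))
    rw [Nat.add_sub_cancel' hfi.le] at hrun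
    omega
  refine ⟨Nat.find hex, (Nat.find_spec hex).1, (Nat.find_spec hex).2, fun t ht => ?_⟩
  have hlt := (Nat.find_spec hex).1
  refine eq_add_of_forall_succ_eq_add_one fun u hu =>
    le_antisymm (hstep _ (by omega)) ?_
  exact not_le.mp (not_and.mp (Nat.find_min hex (show u < Nat.find hex by omega)) (by omega))

theorem hasUniquePredecessor_of_run {e s : ℕ} {x : ℤ} (hbelow : ∀ q ≤ e, c q < x)
    (he : c e = x - 1) (hunique : ∀ q ≤ e, c q = x - 1 → q = e)
    (hrun : ∀ t ≤ s, c (e + 1 + t) = x + t) :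
    HasUniquePredecessor c (e + 1 + s) := by
  have hend := hrun s le_rfl
  refine ⟨e + s, ⟨by omega, ?_⟩, fun q ⟨hq, hcq⟩ => ?_⟩
  · rcases s with _ | s
    · simp [he, hend]
    · have := hrun s (by omega)
      rw [show e + (s + 1) = e + 1 + s by omega, this, hend]
      push_cast
      ring
  · rcases le_or_gt q e with hqe | hqe
    · have := hbelow q hqe
      have hs : s = 0 := by omega
      subst hs
      simpa using hunique q hqe (by simpa [hend] using hcq)
    · obtain ⟨t, rfl⟩ := Nat.exists_eq_add_of_lt hqe
      have := hrun t (by omega)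
      rw [add_right_comm] at this
      omega

theorem eq_succ_of_minimal_hasUniquePredecessor {i : ℕ} (hstep : ∀ k < i, c (k + 1) ≤ c k + 1)
    (hmin0 : ∀ k, c 0 ≤ c k) (hi : HasUniquePredecessor c i)
    (hmin : ∀ j < i, HasUniquePredecessor c j → c j < c (j + 1)) :
    ∃ e, i = e + 1 ∧ c e = c i - 1 ∧ ∀ q ≤ e, c q < c i := by
  obtain ⟨j₀, ⟨hj₀, hcj₀⟩, hj₀_unique⟩ := hi
  obtain ⟨e, hei, hbelow, hce, hce₁⟩ :=
    exists_first_reach hstep (by have := hmin0 j₀; omega) (le_refl (c i))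
  refine ⟨e, ?_, hce, hbelow⟩
  by_contra hne
  have hunique : ∀ q ≤ e, c q = c i - 1 → q = e := fun q hq hcq =>
    (hj₀_unique q ⟨by omega, hcq⟩).trans (hj₀_unique e ⟨hei, hce⟩).symm
  obtain ⟨s, hsi, hdesc, hrun⟩ :=
    exists_first_nonascent (f := e + 1) hstep (by omega) hce₁.ge
  rw [hce₁] at hrun
  have := hmin _ hsi (hasUniquePredecessor_of_run hbelow hce hunique hrun)
  omega

end

theorem List.IsChain.eraseIdx_succ {α : Type*} {R : α → α → Prop} {l : List α}
    (hl : l.IsChain R) {e : ℕ} (he : e + 1 < l.length)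
    (hjoin : ∀ b ∈ l[e + 2]?, R l[e] b) : (l.eraseIdx (e + 1)).IsChain R := by
  rw [List.eraseIdx_eq_take_drop_succ]
  refine (hl.take _).append (hl.drop _) fun a ha b hb => ?_
  simp only [List.getLast?_take, Nat.add_eq_zero_iff, one_ne_zero, and_false, ↓reduceIte,
    Nat.add_sub_cancel, List.getElem?_eq_getElem (show e < l.length by omega), Option.some_or,
    Option.mem_def, Option.some.injEq] at ha
  rw [List.head?_drop] at hb
  exact ha ▸ hjoin b hb

theorem AffineDyck.getD_succ_le {C : List ℤ} (h : AffineDyck C) {k : ℕ}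
    (hk : k + 1 < C.length) : C.getD (k + 1) 0 ≤ C.getD k 0 + 1 := by
  rw [List.getD_eq_getElem _ _ hk, List.getD_eq_getElem _ _ (by omega)]
  exact List.isChain_iff_getElem.mp h k hk

theorem OrdDyck.getD_nonneg {C : List ℤ} (h : OrdDyck C) (k : ℕ) : 0 ≤ C.getD k 0 := by
  rw [List.getD_eq_getElem?_getD]
  cases hk : C[k]? with
  | none => rfl
  | some a => exact h.2.2.2 a (List.mem_of_getElem? hk)

theorem OrdDyck.eraseIdx_succ {C : List ℤ} (h : OrdDyck C) {e : ℕ} (he : e + 1 < C.length)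
    (hjoin : e + 2 < C.length → C.getD (e + 2) 0 ≤ C.getD e 0 + 1) :
    OrdDyck (C.eraseIdx (e + 1)) := by
  obtain ⟨-, hchain, hzero, hnonneg⟩ := h
  refine ⟨?_, ?_, ?_, fun a ha => hnonneg a (List.mem_of_mem_eraseIdx ha)⟩
  · exact List.ne_nil_of_length_pos (by rw [List.length_eraseIdx_of_lt he]; omega)
  · refine List.IsChain.eraseIdx_succ hchain he fun b hb => ?_
    obtain ⟨he₂, rfl⟩ := List.getElem?_eq_some_iff.mp hb
    have := hjoin he₂
    rwa [List.getD_eq_getElem _ _ he₂, List.getD_eq_getElem _ _ (by omega)] at this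
  · rwa [List.getD_eq_getElem?_getD, List.getElem?_eraseIdx_of_lt (by omega),
      ← List.getD_eq_getElem?_getD]

/-- **Structure of extractable elements.**  Let `C` be an ordinary Dyck
sequence whose leftmost eligible index is `i`.  Then `C i` is the leftmost
occurrence of its value in `C`; consequently `i > 0` and `C (i−1) = C i − 1`;
and deleting the entry at index `i` produces an ordinary Dyck sequence. -/
theorem extractable_structure (C : List ℤ) (hC : OrdDyck C) (i : ℕ)
    (hi : Eligible C i) (hmin : ∀ j, Eligible C j → i ≤ j) :
    (∀ p, p < i → C.getD p 0 ≠ C.getD i 0) ∧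
    0 < i ∧
    C.getD (i - 1) 0 = C.getD i 0 - 1 ∧
    OrdDyck (C.eraseIdx i) := by
  obtain ⟨hlt, hpred, hnext⟩ := eligible_iff.mp hi
  have hmin' : ∀ j < i, HasUniquePredecessor (C.getD · 0) j → C.getD j 0 < C.getD (j + 1) 0 :=
    fun j hj hpred' => lt_of_not_ge fun hdesc =>
      (hmin j (eligible_iff.mpr ⟨by omega, hpred', .inr hdesc⟩)).not_gt hj
  obtain ⟨e, rfl, hce, hbelow⟩ := eq_succ_of_minimal_hasUniquePredecessor (c := (C.getD · 0))
    (fun k hk => hC.2.1.getD_succ_le (by omega))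
    (fun k => by rw [hC.2.2.1]; exact hC.getD_nonneg k) hpred hmin'
  refine ⟨fun p hp => (hbelow p (by omega)).ne, e.succ_pos, hce, hC.eraseIdx_succ hlt ?_⟩
  intro he
  have hdesc : C.getD (e + 2) 0 ≤ C.getD (e + 1) 0 := hnext.resolve_left (by omega)
  omega
end

section
/- Fix m ≥ 0. The map (E,F,G) ↦ (F,G,E⁻), where E⁻ is obtained from E by subtracting 1 from every entry, is a bijection from Type 1 Dyck triples of height m to Type 2 Dyck triples of height m, and it preserves the triple statistics: area(E ⧺ F ⧺ G) = area(F ⧺ G ⧺ E⁻) + len(E⁻) and dinv(E ⧺ F ⧺ G) − len(E) = dinv(F ⧺ G ⧺ E⁻) − len(E⁻), where ⧺ denotes concatenation. -/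
/-- A finite integer sequence is a *reverse Dyck sequence* if each entry is at
least the previous entry minus 1. -/
def ReverseDyck (x : List ℤ) : Prop := List.Chain' (fun a b => a - 1 ≤ b) x

/-- A *Dyck `m`-skeleton*. -/
def DyckSkeleton (m : ℤ) (F : List ℤ) : Prop :=
  OrdDyck F ∧ (∀ a ∈ F, a ≤ m) ∧ F.getLast? = some m ∧
  ∀ j, Eligible F j → j + 1 = F.length

/-- A *Type 1 Dyck triple of height `m`*: `F` a Dyck `m`-skeleton, `E` a
reverse `[1, m]` Dyck sequence, `G` an affine `[0, m−1]` Dyck sequence. -/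
def Type1 (m : ℤ) (E F G : List ℤ) : Prop :=
  DyckSkeleton m F ∧
  ReverseDyck E ∧ (∀ a ∈ E, 1 ≤ a ∧ a ≤ m) ∧
  AffineDyck G ∧ (∀ a ∈ G, 0 ≤ a ∧ a ≤ m - 1)

/-- A *Type 2 Dyck triple of height `m`*: `F` a Dyck `m`-skeleton, `G` an
affine `[0, m−1]` Dyck sequence, `E` a reverse `[0, m−1]` Dyck sequence. -/
def Type2 (m : ℤ) (F G E : List ℤ) : Prop :=
  DyckSkeleton m F ∧
  AffineDyck G ∧ (∀ a ∈ G, 0 ≤ a ∧ a ≤ m - 1) ∧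
  ReverseDyck E ∧ (∀ a ∈ E, 0 ≤ a ∧ a ≤ m - 1)

/-- `di x` is the number of pairs `i < j` with `x i = x j + 1`. -/
def di (x : List ℤ) : ℕ :=
  ((Finset.range x.length ×ˢ Finset.range x.length).filter
    (fun p => p.1 < p.2 ∧ x.getD p.1 0 = x.getD p.2 0 + 1)).card

/-- `nv x` is the number of pairs `i < j` with `x i = x j`. -/
def nv (x : List ℤ) : ℕ :=
  ((Finset.range x.length ×ˢ Finset.range x.length).filter
    (fun p => p.1 < p.2 ∧ x.getD p.1 0 = x.getD p.2 0)).card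

/-- `dinv x = di x + nv x`. -/
def dinv (x : List ℤ) : ℕ := di x + nv x

/-- `area x` is the sum of the entries of `x`. -/
def area (x : List ℤ) : ℤ := x.sum


/-!
Lowering `E` by one turns the conditions on `E` in a Type 1 triple into those in a Type 2 triple,
and raising by one undoes it, which gives the bijection; the area drops by exactly `len E`.
For `dinv`, split `dinv (x ++ y)` into pairs inside `x`, pairs inside `y` and cross pairs in
`x × y`, separately for the differences `1` (`di`) and `0` (`nv`). Moving `E` to the end and
lowering it keeps the inner counts, while a cross pair `(e, a)` with `e - a = 1` (resp. `0`)
becomes the pair `(a, e - 1)` with `a - (e - 1) = 0` (resp. `1`): the `di` and `nv` cross terms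
trade places.
-/

open Finset

lemma List.sum_map_sub_const {G : Type*} [AddCommGroup G] (c : G) (l : List G) :
    (l.map (· - c)).sum = l.sum - l.length • c := by
  induction l with
  | nil => simp
  | cons a l ih => simp only [List.map_cons, List.sum_cons, ih, List.length_cons, succ_nsmul]; abel

lemma List.getD_map_of_lt {α β : Type*} (f : α → β) {l : List α} {i : ℕ} (d : α) (d' : β)
    (h : i < l.length) : (l.map f).getD i d' = f (l.getD i d) := by
  rw [List.getD_eq_getElem _ _ (by simpa), List.getD_eq_getElem _ _ h, List.getElem_map]

lemma reverseDyck_map_sub_iff (c : ℤ) {x : List ℤ} :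
    ReverseDyck (x.map (· - c)) ↔ ReverseDyck x :=
  (List.isChain_map _).trans ⟨.imp fun _ _ h => by omega, .imp fun _ _ h => by omega⟩

lemma type2_map_sub_one_iff_type1 {m : ℤ} {E F G : List ℤ} :
    Type2 m F G (E.map (· - 1)) ↔ Type1 m E F G := by
  simp only [Type1, Type2, reverseDyck_map_sub_iff, List.forall_mem_map]
  refine and_congr_right fun _ => ⟨?_, ?_⟩
  · rintro ⟨hG, hGb, hE, hEb⟩
    exact ⟨hE, fun a ha => by have := hEb a ha; omega, hG, hGb⟩
  · rintro ⟨hE, hEb, hG, hGb⟩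
    exact ⟨hG, hGb, hE, fun a ha => by have := hEb a ha; omega⟩

def diffCount (d : ℤ) (x : List ℤ) : ℕ :=
  ((range x.length ×ˢ range x.length).filter
    (fun p => p.1 < p.2 ∧ x.getD p.1 0 = x.getD p.2 0 + d)).card

def crossDiffCount (d : ℤ) (x y : List ℤ) : ℕ :=
  ((range x.length ×ˢ range y.length).filter
    (fun p => x.getD p.1 0 = y.getD p.2 0 + d)).card

lemma dinv_eq_diffCount (x : List ℤ) : dinv x = diffCount 1 x + diffCount 0 x := by
  simp [dinv, di, nv, diffCount]

lemma diffCount_eq_sum (d : ℤ) (x : List ℤ) : diffCount d x =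
    ∑ i ∈ range x.length, ∑ j ∈ range x.length,
      if i < j ∧ x.getD i 0 = x.getD j 0 + d then 1 else 0 := by
  rw [diffCount, card_filter, sum_product]

lemma crossDiffCount_eq_sum (d : ℤ) (x y : List ℤ) : crossDiffCount d x y =
    ∑ i ∈ range x.length, ∑ j ∈ range y.length,
      if x.getD i 0 = y.getD j 0 + d then 1 else 0 := by
  rw [crossDiffCount, card_filter, sum_product]

lemma diffCount_append (d : ℤ) (x y : List ℤ) :
    diffCount d (x ++ y) = diffCount d x + diffCount d y + crossDiffCount d x y := by
  have hx (i : Fin x.length) : (x ++ y).getD i 0 = x.getD i 0 := List.getD_append _ _ _ _ i.2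
  have hy (j : ℕ) : (x ++ y).getD (x.length + j) 0 = y.getD j 0 := by
    rw [List.getD_append_right _ _ _ _ (by omega), Nat.add_sub_cancel_left]
  have hlt (i : Fin x.length) (j : ℕ) : (i : ℕ) < x.length + j := by omega
  have hnlt (i : ℕ) (j : Fin x.length) : ¬ x.length + i < j := by omega
  simp only [diffCount_eq_sum, crossDiffCount_eq_sum, List.length_append,
    sum_range_add, sum_add_distrib]
  simp only [Finset.sum_range, hx, hy, hlt, hnlt,
    Nat.add_lt_add_iff_left, true_and, false_and, if_false, sum_const_zero, add_zero]
  ring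

lemma diffCount_map_sub (c d : ℤ) (x : List ℤ) :
    diffCount d (x.map (· - c)) = diffCount d x := by
  unfold diffCount
  rw [List.length_map]
  congr 1
  refine filter_congr fun p hp => ?_
  rw [mem_product, mem_range, mem_range] at hp
  rw [List.getD_map_of_lt _ 0 _ hp.1, List.getD_map_of_lt _ 0 _ hp.2]
  omega

lemma crossDiffCount_map_sub_right (c d : ℤ) (x y : List ℤ) :
    crossDiffCount d x (y.map (· - c)) = crossDiffCount (d - c) x y := by
  unfold crossDiffCount
  rw [List.length_map]
  congr 1
  refine filter_congr fun p hp => ?_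
  rw [mem_product, mem_range, mem_range] at hp
  rw [List.getD_map_of_lt _ 0 _ hp.2]
  omega

lemma crossDiffCount_comm (d : ℤ) (x y : List ℤ) :
    crossDiffCount d x y = crossDiffCount (-d) y x := by
  refine card_nbij' Prod.swap Prod.swap ?_ ?_ (fun _ _ => rfl) (fun _ _ => rfl) <;>
  · intro p hp
    simp only [coe_filter, mem_product, mem_range, Set.mem_ofPred_eq, Prod.fst_swap,
      Prod.snd_swap] at hp ⊢
    omega

lemma dinv_append_map_sub_one (x y : List ℤ) : dinv (y ++ x.map (· - 1)) = dinv (x ++ y) := by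
  rw [dinv_eq_diffCount, dinv_eq_diffCount, diffCount_append, diffCount_append,
    diffCount_append, diffCount_append, diffCount_map_sub, diffCount_map_sub,
    crossDiffCount_map_sub_right, crossDiffCount_map_sub_right, crossDiffCount_comm _ y,
    crossDiffCount_comm _ y]
  norm_num
  ring

theorem type1_type2_shift_general (m : ℤ) :
    (∀ E F G : List ℤ, Type1 m E F G → Type2 m F G (E.map (· - 1))) ∧
    (∀ F G H : List ℤ, Type2 m F G H →
      ∃! E : List ℤ,
        Type1 m E F G ∧ E.map (· - 1) = H) ∧
    (∀ E F G : List ℤ, Type1 m E F G →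
      area (E ++ F ++ G) =
        area (F ++ G ++ E.map (· - 1)) + (E.map (· - 1)).length ∧
      dinv (E ++ F ++ G) + (E.map (· - 1)).length =
        dinv (F ++ G ++ E.map (· - 1)) + E.length) := by
  refine ⟨fun E F G h => type2_map_sub_one_iff_type1.2 h, fun F G H h => ?_,
    fun E F G _ => ⟨?_, ?_⟩⟩
  · have hH : (H.map (· + 1)).map (· - 1) = H := by simp [Function.comp_def]
    refine ⟨H.map (· + 1), ⟨type2_map_sub_one_iff_type1.1 (by rwa [hH]), hH⟩, ?_⟩
    rintro E ⟨-, rfl⟩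
    simp [Function.comp_def]
  · simp only [area, List.sum_append, List.sum_map_sub_const, List.length_map, nsmul_eq_mul,
      mul_one]
    ring
  · rw [dinv_append_map_sub_one, List.append_assoc, List.length_map]

/-- **The Type 1–Type 2 shift.**  Fix `m ≥ 0`.  The map
`(E, F, G) ↦ (F, G, E⁻)`, with `E⁻` obtained by subtracting `1` from each
entry of `E`, is a bijection from Type 1 Dyck triples of height `m` to Type 2
Dyck triples of height `m`, and it preserves the triple statistics. -/
theorem type1_type2_shift (m : ℤ) (hm : 0 ≤ m) :
    (∀ E F G : List ℤ, Type1 m E F G → Type2 m F G (E.map (· - 1))) ∧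
    (∀ F G H : List ℤ, Type2 m F G H →
      ∃! E : List ℤ,
        Type1 m E F G ∧ E.map (· - 1) = H) ∧
    (∀ E F G : List ℤ, Type1 m E F G →
      area (E ++ F ++ G) =
        area (F ++ G ++ E.map (· - 1)) + (E.map (· - 1)).length ∧
      dinv (E ++ F ++ G) + (E.map (· - 1)).length =
        dinv (F ++ G ++ E.map (· - 1)) + E.length) :=
  type1_type2_shift_general m
end
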